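/- For α > 0 and probability densities f, g (with respect to a measure μ on ℝ) with finite ∫ f^{1+α} dμ and ∫ g^{1+α} dμ, the logarithmic density power divergence LDPD_α(g,f) := log(∫ f^{α+1}) − (1+1/α) log(∫ f^α g) + (1/α) log(∫ g^{α+1}) is nonnegative, and equals 0 if and only if f = g μ-a.e. -/

import Mathlib

open MeasureTheory ENNReal Set

/-- A probability density in `L_{μ,α}`: nonnegative (being `ℝ≥0∞`-valued), measurable,
integrating to `1`, with finite `(1+α)`-th power integral. -/
def IsDensity (μ : Measure ℝ) (α : ℝ) (f : ℝ → ℝ≥0∞) : Prop :=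
  Measurable f ∧ ∫⁻ x, f x ∂μ = 1 ∧ ∫⁻ x, f x ^ (1 + α) ∂μ < ⊤

/-- The functional density power divergence
`FDPD_{φ,α}(g,f) = φ(∫ f^{α+1}) − (1+1/α) φ(∫ f^α g) + (1/α) φ(∫ g^{α+1})`. -/
noncomputable def FDPD (φ : ℝ≥0∞ → EReal) (α : ℝ) (μ : Measure ℝ)
    (g f : ℝ → ℝ≥0∞) : EReal :=
  φ (∫⁻ x, f x ^ (α + 1) ∂μ)
    - ((1 + 1 / α : ℝ) : EReal) * φ (∫⁻ x, f x ^ α * g x ∂μ)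
    + ((1 / α : ℝ) : EReal) * φ (∫⁻ x, g x ^ (α + 1) ∂μ)

/-- `ψ` is convex on `[-∞,∞)` (in the extended-real sense). -/
def ERealConvexOn (ψ : EReal → EReal) : Prop :=
  ∀ x : EReal, x < ⊤ → ∀ y : EReal, y < ⊤ → ∀ t : ℝ, 0 < t → t < 1 →
    ψ ((t : EReal) * x + ((1 - t : ℝ) : EReal) * y) ≤
      (t : EReal) * ψ x + ((1 - t : ℝ) : EReal) * ψ y

/-- `FDPD_{φ,α}` is a valid divergence on densities in `L_{μ,α}`: it is nonnegative, and
vanishes exactly when the two densities agree `μ`-a.e. -/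
def IsValidDivergence (φ : ℝ≥0∞ → EReal) (α : ℝ) (μ : Measure ℝ) : Prop :=
  ∀ f g : ℝ → ℝ≥0∞, IsDensity μ α f → IsDensity μ α g →
    0 ≤ FDPD φ α μ g f ∧ (FDPD φ α μ g f = 0 ↔ f =ᵐ[μ] g)

/-!
With `A = ∫ f^(α+1)`, `B = ∫ f^α g`, `C = ∫ g^(α+1)`, `p = α/(α+1)` and `q = 1/(α+1)`, one has
`f^α g = (f^(α+1))^p (g^(α+1))^q`, so Hölder's inequality gives `B ≤ A^p C^q`, and
`LDPD_α = (1 + 1/α) log (A^p C^q / B) ≥ 0` (it is `+∞` when `B = 0`). If it vanishes, Hölder is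
an equality, so the weighted AM-GM inequality `F^p G^q ≤ p F + q G` between the normalized
`F = f^(α+1)/A` and `G = g^(α+1)/C` is an equality a.e., which forces `F = G`; hence `f` and `g`
are proportional, and, both integrating to `1`, equal.
-/

section

variable {X : Type*} [MeasurableSpace X] {μ : Measure X} {f g : X → ℝ≥0∞}

theorem lintegral_rpow_eq_zero_iff {r : ℝ} (hr : 0 < r) (hf : AEMeasurable f μ) :
    ∫⁻ x, f x ^ r ∂μ = 0 ↔ ∫⁻ x, f x ∂μ = 0 := by
  rw [lintegral_eq_zero_iff' (hf.pow_const r), lintegral_eq_zero_iff' hf]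
  simp only [Filter.EventuallyEq, Pi.zero_apply, rpow_eq_zero_iff_of_pos hr]

theorem ae_eq_of_ae_eq_const_mul_of_lintegral_eq_one {k : ℝ≥0∞} (hg : AEMeasurable g μ)
    (hfg : f =ᵐ[μ] fun x => k * g x) (hf1 : ∫⁻ x, f x ∂μ = 1) (hg1 : ∫⁻ x, g x ∂μ = 1) :
    f =ᵐ[μ] g := by
  have hk : k = 1 := by
    rw [← hf1, lintegral_congr_ae hfg, lintegral_const_mul'' _ hg, hg1, mul_one]
  filter_upwards [hfg] with x hx
  rw [hx, hk, one_mul]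

end

namespace ENNReal

variable {p q : ℝ} {x y : ℝ≥0∞}

theorem rpow_mul_rpow_eq_ofReal (hp : 0 ≤ p) (hq : 0 ≤ q) (hx : x ≠ ⊤) (hy : y ≠ ⊤) :
    x ^ p * y ^ q = ENNReal.ofReal (x.toReal ^ p * y.toReal ^ q) := by
  rw [ENNReal.ofReal_mul (by positivity), ← ENNReal.ofReal_rpow_of_nonneg toReal_nonneg hp,
    ← ENNReal.ofReal_rpow_of_nonneg toReal_nonneg hq, ofReal_toReal hx, ofReal_toReal hy]

theorem ofReal_mul_add_ofReal_mul_eq_ofReal (hp : 0 ≤ p) (hq : 0 ≤ q) (hx : x ≠ ⊤)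
    (hy : y ≠ ⊤) :
    ENNReal.ofReal p * x + ENNReal.ofReal q * y =
      ENNReal.ofReal (p * x.toReal + q * y.toReal) := by
  rw [ENNReal.ofReal_add (by positivity) (by positivity), ENNReal.ofReal_mul hp,
    ENNReal.ofReal_mul hq, ofReal_toReal hx, ofReal_toReal hy]

theorem rpow_mul_rpow_le_add (hp : 0 ≤ p) (hq : 0 ≤ q) (hpq : p + q = 1) (hx : x ≠ ⊤)
    (hy : y ≠ ⊤) : x ^ p * y ^ q ≤ ENNReal.ofReal p * x + ENNReal.ofReal q * y := by
  rw [rpow_mul_rpow_eq_ofReal hp hq hx hy, ofReal_mul_add_ofReal_mul_eq_ofReal hp hq hx hy]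
  exact ofReal_le_ofReal
    (Real.geom_mean_le_arith_mean2_weighted hp hq toReal_nonneg toReal_nonneg hpq)

theorem eq_of_rpow_mul_rpow_eq_add (hp : 0 < p) (hq : 0 < q) (hpq : p + q = 1) (hx : x ≠ ⊤)
    (hy : y ≠ ⊤) (h : x ^ p * y ^ q = ENNReal.ofReal p * x + ENNReal.ofReal q * y) : x = y := by
  rw [rpow_mul_rpow_eq_ofReal hp.le hq.le hx hy,
    ofReal_mul_add_ofReal_mul_eq_ofReal hp.le hq.le hx hy,
    ofReal_eq_ofReal_iff (by positivity) (by positivity),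
    Real.geom_mean_eq_arith_mean2_weighted_iff_of_pos hp hq toReal_nonneg toReal_nonneg hpq] at h
  exact (toReal_eq_toReal_iff' hx hy).1 h

theorem eq_rpow_inv_mul_of_inv_mul_rpow_eq {a c : ℝ≥0∞} {r : ℝ} (hr : 0 < r) (ha0 : a ≠ 0)
    (ha_top : a ≠ ⊤) (h : a⁻¹ * x ^ r = c⁻¹ * y ^ r) : x = (a * c⁻¹) ^ r⁻¹ * y := by
  have hpow : x ^ r = a * c⁻¹ * y ^ r := by
    rw [mul_assoc, ← h, ← mul_assoc, ENNReal.mul_inv_cancel ha0 ha_top, one_mul]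
  rw [← rpow_rpow_inv hr.ne' x, hpow, mul_rpow_of_nonneg _ _ (inv_pos.2 hr).le,
    rpow_rpow_inv hr.ne']

theorem rpow_mul_eq_rpow_rpow_mul_rpow_rpow {α : ℝ} (hα : α + 1 ≠ 0) (x y : ℝ≥0∞) :
    x ^ α * y = (x ^ (α + 1)) ^ (α / (α + 1)) * (y ^ (α + 1)) ^ (1 / (α + 1)) := by
  rw [← rpow_mul, ← rpow_mul, mul_div_cancel₀ _ hα, mul_one_div_cancel hα, rpow_one]

variable {X : Type*} [MeasurableSpace X] {μ : Measure X} {F G : X → ℝ≥0∞}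

theorem ae_eq_of_lintegral_rpow_mul_rpow_eq_one (hp : 0 < p) (hq : 0 < q) (hpq : p + q = 1)
    (hF : AEMeasurable F μ) (hG : AEMeasurable G μ) (hF1 : ∫⁻ x, F x ∂μ = 1)
    (hG1 : ∫⁻ x, G x ∂μ = 1) (h : ∫⁻ x, F x ^ p * G x ^ q ∂μ = 1) : F =ᵐ[μ] G := by
  have hF_fin : ∀ᵐ x ∂μ, F x ≠ ⊤ := ae_lt_top' hF (by simp [hF1]) |>.mono fun _ => ne_of_lt
  have hG_fin : ∀ᵐ x ∂μ, G x ≠ ⊤ := ae_lt_top' hG (by simp [hG1]) |>.mono fun _ => ne_of_lt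
  have h_mean : ∫⁻ x, ENNReal.ofReal p * F x + ENNReal.ofReal q * G x ∂μ = 1 := by
    rw [lintegral_add_left' (hF.const_mul _), lintegral_const_mul'' _ hF,
      lintegral_const_mul'' _ hG, hF1, hG1, mul_one, mul_one,
      ← ENNReal.ofReal_add hp.le hq.le, hpq, ofReal_one]
  have h_eq : (fun x => F x ^ p * G x ^ q) =ᵐ[μ]
      fun x => ENNReal.ofReal p * F x + ENNReal.ofReal q * G x := by
    refine ae_eq_of_ae_le_of_lintegral_le ?_ (by simp [h]) ?_ (by rw [h, h_mean])
    · filter_upwards [hF_fin, hG_fin] with x hFx hGx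
      exact rpow_mul_rpow_le_add hp.le hq.le hpq hFx hGx
    · exact (hF.const_mul _).add (hG.const_mul _)
  filter_upwards [h_eq, hF_fin, hG_fin] with x hx hFx hGx
  exact eq_of_rpow_mul_rpow_eq_add hp hq hpq hFx hGx hx

theorem ae_eq_of_lintegral_mul_norm_pow_eq (hp : 0 < p) (hq : 0 < q) (hpq : p + q = 1)
    (hF : AEMeasurable F μ) (hG : AEMeasurable G μ) (hF0 : ∫⁻ x, F x ∂μ ≠ 0)
    (hFtop : ∫⁻ x, F x ∂μ ≠ ⊤) (hG0 : ∫⁻ x, G x ∂μ ≠ 0) (hGtop : ∫⁻ x, G x ∂μ ≠ ⊤)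
    (h : ∫⁻ x, F x ^ p * G x ^ q ∂μ = (∫⁻ x, F x ∂μ) ^ p * (∫⁻ x, G x ∂μ) ^ q) :
    (fun x => (∫⁻ x, F x ∂μ)⁻¹ * F x) =ᵐ[μ] fun x => (∫⁻ x, G x ∂μ)⁻¹ * G x := by
  set a := ∫⁻ x, F x ∂μ
  set c := ∫⁻ x, G x ∂μ
  refine ae_eq_of_lintegral_rpow_mul_rpow_eq_one hp hq hpq (hF.const_mul _) (hG.const_mul _)
    ?_ ?_ ?_
  · rw [lintegral_const_mul'' _ hF, ENNReal.inv_mul_cancel hF0 hFtop]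
  · rw [lintegral_const_mul'' _ hG, ENNReal.inv_mul_cancel hG0 hGtop]
  · have hap : a ^ p ≠ 0 := (rpow_pos (pos_iff_ne_zero.2 hF0) hFtop).ne'
    have hcq : c ^ q ≠ 0 := (rpow_pos (pos_iff_ne_zero.2 hG0) hGtop).ne'
    have hpow (x) :
        (a⁻¹ * F x) ^ p * (c⁻¹ * G x) ^ q = (a ^ p * c ^ q)⁻¹ * (F x ^ p * G x ^ q) := by
      rw [mul_rpow_of_nonneg _ _ hp.le, mul_rpow_of_nonneg _ _ hq.le, inv_rpow, inv_rpow,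
        ENNReal.mul_inv (.inl hap) (.inr hcq)]
      ring
    simp_rw [hpow]
    rw [lintegral_const_mul' _ _ (inv_ne_top.2 (mul_ne_zero hap hcq)), h]
    exact ENNReal.inv_mul_cancel (mul_ne_zero hap hcq)
      (mul_ne_top (rpow_ne_top_of_nonneg hp.le hFtop) (rpow_ne_top_of_nonneg hq.le hGtop))

end ENNReal

section HolderExponents

variable {X : Type*} [MeasurableSpace X] {μ : Measure X} {f g : X → ℝ≥0∞} {α : ℝ}

theorem lintegral_rpow_mul_le (hα : 0 ≤ α) (hf : AEMeasurable f μ) (hg : AEMeasurable g μ) :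
    ∫⁻ x, f x ^ α * g x ∂μ ≤
      (∫⁻ x, f x ^ (α + 1) ∂μ) ^ (α / (α + 1)) * (∫⁻ x, g x ^ (α + 1) ∂μ) ^ (1 / (α + 1)) := by
  have hα1 : 0 < α + 1 := by linarith
  simp_rw [ENNReal.rpow_mul_eq_rpow_rpow_mul_rpow_rpow hα1.ne']
  exact ENNReal.lintegral_mul_norm_pow_le (hf.pow_const _) (hg.pow_const _) (by positivity)
    (by positivity) (by field_simp)

theorem lintegral_rpow_mul_eq_of_ae_eq (hα : 0 ≤ α) (hfg : f =ᵐ[μ] g) :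
    ∫⁻ x, f x ^ α * g x ∂μ =
      (∫⁻ x, f x ^ (α + 1) ∂μ) ^ (α / (α + 1)) * (∫⁻ x, g x ^ (α + 1) ∂μ) ^ (1 / (α + 1)) := by
  have hB : ∫⁻ x, f x ^ α * g x ∂μ = ∫⁻ x, f x ^ (α + 1) ∂μ := lintegral_congr_ae <| by
    filter_upwards [hfg] with x hx
    rw [← hx, rpow_add_of_nonneg _ _ hα zero_le_one, rpow_one]
  have hC : ∫⁻ x, g x ^ (α + 1) ∂μ = ∫⁻ x, f x ^ (α + 1) ∂μ :=
    lintegral_congr_ae <| by filter_upwards [hfg] with x hx; rw [hx]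
  rw [hB, hC, ← rpow_add_of_nonneg _ _ (by positivity) (by positivity),
    show α / (α + 1) + 1 / (α + 1) = 1 by field_simp, rpow_one]

theorem ae_eq_of_lintegral_rpow_mul_eq (hα : 0 < α) (hf : AEMeasurable f μ)
    (hg : AEMeasurable g μ) (hf1 : ∫⁻ x, f x ∂μ = 1) (hg1 : ∫⁻ x, g x ∂μ = 1)
    (hA : ∫⁻ x, f x ^ (α + 1) ∂μ ≠ ⊤) (hC : ∫⁻ x, g x ^ (α + 1) ∂μ ≠ ⊤)
    (h : ∫⁻ x, f x ^ α * g x ∂μ =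
      (∫⁻ x, f x ^ (α + 1) ∂μ) ^ (α / (α + 1)) * (∫⁻ x, g x ^ (α + 1) ∂μ) ^ (1 / (α + 1))) :
    f =ᵐ[μ] g := by
  have hα1 : 0 < α + 1 := by linarith
  have hA0 : ∫⁻ x, f x ^ (α + 1) ∂μ ≠ 0 :=
    (lintegral_rpow_eq_zero_iff hα1 hf).not.2 (hf1 ▸ one_ne_zero)
  have hC0 : ∫⁻ x, g x ^ (α + 1) ∂μ ≠ 0 :=
    (lintegral_rpow_eq_zero_iff hα1 hg).not.2 (hg1 ▸ one_ne_zero)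
  simp_rw [ENNReal.rpow_mul_eq_rpow_rpow_mul_rpow_rpow hα1.ne'] at h
  have h_normalized := ENNReal.ae_eq_of_lintegral_mul_norm_pow_eq (by positivity)
    (by positivity) (by field_simp) (hf.pow_const _) (hg.pow_const _) hA0 hA hC0 hC h
  exact ae_eq_of_ae_eq_const_mul_of_lintegral_eq_one hg
    (h_normalized.mono fun x hx => ENNReal.eq_rpow_inv_mul_of_inv_mul_rpow_eq hα1 hA0 hA hx)
    hf1 hg1

end HolderExponents

namespace IsDensity

variable {μ : Measure ℝ} {α : ℝ} {f : ℝ → ℝ≥0∞}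

theorem lintegral_rpow_ne_top (hf : IsDensity μ α f) : ∫⁻ x, f x ^ (α + 1) ∂μ ≠ ⊤ := by
  rw [add_comm]; exact hf.2.2.ne

theorem lintegral_rpow_ne_zero (hf : IsDensity μ α f) (hα : 0 < α + 1) :
    ∫⁻ x, f x ^ (α + 1) ∂μ ≠ 0 :=
  (lintegral_rpow_eq_zero_iff hα hf.1.aemeasurable).not.2 (hf.2.1 ▸ one_ne_zero)

end IsDensity

noncomputable def ldpdOfIntegrals (α : ℝ) (A B C : ℝ≥0∞) : EReal :=
  ENNReal.log A - ((1 + 1 / α : ℝ) : EReal) * ENNReal.log B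
    + ((1 / α : ℝ) : EReal) * ENNReal.log C

section ldpdOfIntegrals

variable {α : ℝ} {A B C : ℝ≥0∞}

theorem ldpdOfIntegrals_zero (hα : 0 < α) (hA : A ≠ 0) (hC0 : C ≠ 0) (hCtop : C ≠ ⊤) :
    ldpdOfIntegrals α A 0 C = ⊤ := by
  rw [ldpdOfIntegrals, ENNReal.log_zero, EReal.coe_mul_bot_of_pos (by positivity),
    EReal.sub_bot (by simp [hA]), log_pos_real hC0 hCtop, ← EReal.coe_mul, EReal.top_add_coe]

theorem ldpdOfIntegrals_eq_coe (hα : 0 < α) (hA0 : A ≠ 0) (hAtop : A ≠ ⊤) (hB0 : B ≠ 0)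
    (hBtop : B ≠ ⊤) (hC0 : C ≠ 0) (hCtop : C ≠ ⊤) :
    ldpdOfIntegrals α A B C =
      ((1 + 1 / α) * Real.log ((A ^ (α / (α + 1)) * C ^ (1 / (α + 1))).toReal / B.toReal) :
        ℝ) := by
  have ha := toReal_pos hA0 hAtop
  have hb := toReal_pos hB0 hBtop
  have hc := toReal_pos hC0 hCtop
  rw [ldpdOfIntegrals, log_pos_real hA0 hAtop, log_pos_real hB0 hBtop, log_pos_real hC0 hCtop,
    ← EReal.coe_mul, ← EReal.coe_mul, ← EReal.coe_sub, ← EReal.coe_add, EReal.coe_eq_coe_iff,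
    toReal_mul, ← toReal_rpow, ← toReal_rpow, Real.log_div (by positivity) hb.ne',
    Real.log_mul (by positivity) (by positivity), Real.log_rpow ha, Real.log_rpow hc]
  field_simp
  ring

theorem ldpdOfIntegrals_nonneg_and_eq_zero_iff (hα : 0 < α) (hA0 : A ≠ 0) (hAtop : A ≠ ⊤)
    (hC0 : C ≠ 0) (hCtop : C ≠ ⊤) (hB : B ≤ A ^ (α / (α + 1)) * C ^ (1 / (α + 1))) :
    0 ≤ ldpdOfIntegrals α A B C ∧
      (ldpdOfIntegrals α A B C = 0 ↔ B = A ^ (α / (α + 1)) * C ^ (1 / (α + 1))) := by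
  have hM0 : A ^ (α / (α + 1)) * C ^ (1 / (α + 1)) ≠ 0 :=
    mul_ne_zero (rpow_pos (pos_iff_ne_zero.2 hA0) hAtop).ne'
      (rpow_pos (pos_iff_ne_zero.2 hC0) hCtop).ne'
  have hMtop : A ^ (α / (α + 1)) * C ^ (1 / (α + 1)) ≠ ⊤ :=
    mul_ne_top (rpow_ne_top_of_nonneg (by positivity) hAtop)
      (rpow_ne_top_of_nonneg (by positivity) hCtop)
  rcases eq_or_ne B 0 with rfl | hB0
  · rw [ldpdOfIntegrals_zero hα hA0 hC0 hCtop]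
    exact ⟨le_top, iff_of_false EReal.top_ne_zero hM0.symm⟩
  have hBtop : B ≠ ⊤ := ne_top_of_le_ne_top hMtop hB
  have hb := toReal_pos hB0 hBtop
  set r := (A ^ (α / (α + 1)) * C ^ (1 / (α + 1))).toReal / B.toReal
  have hr : 1 ≤ r := by rw [one_le_div hb]; exact toReal_mono hMtop hB
  have hlog_eq_zero : Real.log r = 0 ↔ r = 1 :=
    ⟨Real.eq_one_of_pos_of_log_eq_zero (by linarith), fun h => by rw [h, Real.log_one]⟩
  rw [ldpdOfIntegrals_eq_coe hα hA0 hAtop hB0 hBtop hC0 hCtop, EReal.coe_nonneg,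
    EReal.coe_eq_zero, mul_eq_zero, or_iff_right (by positivity), hlog_eq_zero,
    div_eq_one_iff_eq hb.ne', eq_comm, toReal_eq_toReal_iff' hBtop hMtop]
  exact ⟨mul_nonneg (by positivity) (Real.log_nonneg hr), Iff.rfl⟩

end ldpdOfIntegrals

theorem FDPD_log_eq_ldpdOfIntegrals (α : ℝ) (μ : Measure ℝ) (g f : ℝ → ℝ≥0∞) :
    FDPD ENNReal.log α μ g f = ldpdOfIntegrals α (∫⁻ x, f x ^ (α + 1) ∂μ)
      (∫⁻ x, f x ^ α * g x ∂μ) (∫⁻ x, g x ^ (α + 1) ∂μ) := rfl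

/-- the logarithmic density power divergence `LDPD_α = FDPD_{log,α}`
(with `log 0 = -∞`) is nonnegative on densities in `L_{μ,α}`, and vanishes iff the two
densities agree `μ`-a.e. -/
theorem ldpd_nonneg_and_eq_zero_iff
    (μ : Measure ℝ) (α : ℝ) (hα : 0 < α)
    (f g : ℝ → ℝ≥0∞) (hf : IsDensity μ α f) (hg : IsDensity μ α g) :
    0 ≤ FDPD ENNReal.log α μ g f ∧ (FDPD ENNReal.log α μ g f = 0 ↔ f =ᵐ[μ] g) := by
  have hα1 : 0 < α + 1 := by linarith
  obtain ⟨hnonneg, hzero⟩ := ldpdOfIntegrals_nonneg_and_eq_zero_iff hα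
    (hf.lintegral_rpow_ne_zero hα1) hf.lintegral_rpow_ne_top
    (hg.lintegral_rpow_ne_zero hα1) hg.lintegral_rpow_ne_top
    (lintegral_rpow_mul_le hα.le hf.1.aemeasurable hg.1.aemeasurable)
  rw [FDPD_log_eq_ldpdOfIntegrals, hzero]
  exact ⟨hnonneg, ae_eq_of_lintegral_rpow_mul_eq hα hf.1.aemeasurable hg.1.aemeasurable hf.2.1
    hg.2.1 hf.lintegral_rpow_ne_top hg.lintegral_rpow_ne_top,
    lintegral_rpow_mul_eq_of_ae_eq hα.le⟩
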